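/- Let X be a rearrangement invariant space over (-1,1) with nontrivial Boyd indices. Then the vector measure m_X : A ↦ T(χ_A) has totally infinite variation: |m_X|(A) = ∞ for every Borel set A with μ(A) > 0. -/

import Mathlib

open MeasureTheory Set Filter Topology ENNReal NNReal

noncomputable section

/-- Lebesgue measure on the interval `(-1, 1)`. -/
def vol : Measure ℝ := volume.restrict (Set.Ioo (-1 : ℝ) 1)

/-- The finite Hilbert transform, defined at `x` as the principal value
`(1/π) lim_{ε→0⁺} (∫_{-1}^{x-ε} + ∫_{x+ε}^{1}) f(y)/(y-x) dy`. -/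
def FHT (f : ℝ → ℝ) (x : ℝ) : ℝ :=
  limUnder (nhdsWithin (0 : ℝ) (Set.Ioi 0)) fun ε : ℝ =>
    (1 / Real.pi) * ((∫ y in Set.Ioo (-1 : ℝ) (x - ε), f y / (y - x)) +
      ∫ y in Set.Ioo (x + ε) (1 : ℝ), f y / (y - x))

/-- Order continuity of the norm: `f_n ↓ 0` (a.e.) implies `‖f_n‖ ↓ 0`. -/
def OrderContinuousNorm (Mem : (ℝ → ℝ) → Prop) (Nrm : (ℝ → ℝ) → ℝ) : Prop :=
  ∀ f : ℕ → ℝ → ℝ, (∀ n, Mem (f n)) →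
    (∀ n, ∀ᵐ x ∂vol, 0 ≤ f (n + 1) x ∧ f (n + 1) x ≤ f n x) →
    (∀ᵐ x ∂vol, Tendsto (fun n => f n x) atTop (𝓝 0)) →
    Tendsto (fun n => Nrm (f n)) atTop (𝓝 0)

/-- The Fatou property: for a norm-bounded increasing sequence `0 ≤ f_n ↑ g` one has
`g ∈ X` and `‖f_n‖ → ‖g‖`. -/
def FatouProperty (Mem : (ℝ → ℝ) → Prop) (Nrm : (ℝ → ℝ) → ℝ) : Prop :=
  ∀ (f : ℕ → ℝ → ℝ) (g : ℝ → ℝ) (C : ℝ), (∀ n, Mem (f n)) → AEMeasurable g vol →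
    (∀ n, ∀ᵐ x ∂vol, 0 ≤ f n x ∧ f n x ≤ f (n + 1) x) →
    (∀ᵐ x ∂vol, Tendsto (fun n => f n x) atTop (𝓝 (g x))) →
    (∀ n, Nrm (f n) ≤ C) →
    Mem g ∧ Tendsto (fun n => Nrm (f n)) atTop (𝓝 (Nrm g))

/-- The order continuous (absolutely continuous) part `Y_a` of a function space:
`f ∈ Y_a` iff `|f| ≥ g_n ↓ 0` (a.e.) implies `‖g_n‖ ↓ 0`. -/
def OCPart (Mem : (ℝ → ℝ) → Prop) (Nrm : (ℝ → ℝ) → ℝ) (f : ℝ → ℝ) : Prop :=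
  Mem f ∧ ∀ g : ℕ → ℝ → ℝ, (∀ n, Mem (g n)) →
    (∀ n, ∀ᵐ x ∂vol, 0 ≤ g n x ∧ g (n + 1) x ≤ g n x ∧ g n x ≤ |f x|) →
    (∀ᵐ x ∂vol, Tendsto (fun n => g n x) atTop (𝓝 0)) →
    Tendsto (fun n => Nrm (g n)) atTop (𝓝 0)

/-- A Banach function space over `((-1,1), ℬ, μ)`: an order ideal of `L⁰` containing the
simple functions, complete under a lattice norm. -/
structure BFS where
  Mem : (ℝ → ℝ) → Prop
  Nrm : (ℝ → ℝ) → ℝ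
  mem_aemeasurable : ∀ f, Mem f → AEMeasurable f vol
  mem_congr : ∀ f g, f =ᵐ[vol] g → Mem f → Mem g
  nrm_congr : ∀ f g, f =ᵐ[vol] g → Nrm f = Nrm g
  add_mem : ∀ f g, Mem f → Mem g → Mem (f + g)
  smul_mem : ∀ (c : ℝ) f, Mem f → Mem (c • f)
  ideal_mem : ∀ f g, Mem f → AEMeasurable g vol → (∀ᵐ x ∂vol, |g x| ≤ |f x|) → Mem g
  simple_mem : ∀ s : MeasureTheory.SimpleFunc ℝ ℝ, Mem s
  nrm_nonneg : ∀ f, Mem f → 0 ≤ Nrm f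
  nrm_eq_zero_iff : ∀ f, Mem f → (Nrm f = 0 ↔ f =ᵐ[vol] 0)
  nrm_add_le : ∀ f g, Mem f → Mem g → Nrm (f + g) ≤ Nrm f + Nrm g
  nrm_smul : ∀ (c : ℝ) f, Mem f → Nrm (c • f) = |c| * Nrm f
  nrm_mono : ∀ f g, Mem f → Mem g → (∀ᵐ x ∂vol, |f x| ≤ |g x|) → Nrm f ≤ Nrm g
  complete : ∀ f : ℕ → ℝ → ℝ, (∀ n, Mem (f n)) →
    (∀ ε : ℝ, 0 < ε → ∃ N, ∀ m ≥ N, ∀ n ≥ N, Nrm (f m - f n) < ε) →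
    ∃ g, Mem g ∧ Tendsto (fun n => Nrm (f n - g)) atTop (𝓝 0)

/-- Distribution function `λ ↦ μ{|f| > λ}`. -/
def distrib (f : ℝ → ℝ) (lam : ℝ) : ℝ≥0∞ := vol {x | lam < |f x|}

/-- Rearrangement invariant space: Fatou property, membership is monotone with respect to
the distribution function (equivalently the decreasing rearrangement), and the norm is
rearrangement invariant. -/
def RearrInvariant (X : BFS) : Prop :=
  FatouProperty X.Mem X.Nrm ∧
  (∀ f g, X.Mem f → AEMeasurable g vol →
    (∀ lam : ℝ, 0 < lam → distrib g lam ≤ distrib f lam) → X.Mem g) ∧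
  (∀ f g, X.Mem f → X.Mem g →
    (∀ lam : ℝ, 0 < lam → distrib g lam = distrib f lam) → X.Nrm g = X.Nrm f)

/-- The dilation operator `E_t`. -/
def dilate (t : ℝ) (f : ℝ → ℝ) : ℝ → ℝ := fun x =>
  if t * x ∈ Set.Ioo (-1 : ℝ) 1 then f (t * x) else 0

/-- The operator norm of the dilation `E_t` on `X`. -/
def dilNorm (X : BFS) (t : ℝ) : ℝ :=
  sInf {C : ℝ | 0 ≤ C ∧ ∀ f, X.Mem f → X.Mem (dilate t f) ∧ X.Nrm (dilate t f) ≤ C * X.Nrm f}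

/-- The lower Boyd index of `X`. -/
def lowerBoyd (X : BFS) : ℝ :=
  sSup {r : ℝ | ∃ t ∈ Set.Ioo (0 : ℝ) 1, r = Real.log (dilNorm X (1 / t)) / Real.log t}

/-- The upper Boyd index of `X`. -/
def upperBoyd (X : BFS) : ℝ :=
  sInf {r : ℝ | ∃ t ∈ Set.Ioi (1 : ℝ), r = Real.log (dilNorm X (1 / t)) / Real.log t}

/-- Nontrivial Boyd indices: `0 < α_X ≤ ᾱ_X < 1`. -/
def NontrivialBoyd (X : BFS) : Prop :=
  0 < lowerBoyd X ∧ lowerBoyd X ≤ upperBoyd X ∧ upperBoyd X < 1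

/-- The finite Hilbert transform maps `X` boundedly into `X` (Boyd's theorem). -/
def THilbBounded (X : BFS) : Prop :=
  (∀ f, X.Mem f → X.Mem (FHT f)) ∧
  ∃ C : ℝ, ∀ f, X.Mem f → X.Nrm (FHT f) ≤ C * X.Nrm f

/-- The variation of the vector measure `m_X : A ↦ T(χ_A)`: the supremum over finite
disjoint measurable families inside `A` of the sums `Σ_j ‖m_X(A_j)‖_X`. -/
def MXVariation (XNrm : (ℝ → ℝ) → ℝ) (A : Set ℝ) : ℝ≥0∞ :=
  ⨆ (n : ℕ) (P : Fin n → Set ℝ) (_ : ∀ i, MeasurableSet (P i))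
    (_ : Pairwise (Function.onFun Disjoint P)) (_ : ∀ i, P i ⊆ A),
    ∑ i, ENNReal.ofReal (XNrm (FHT ((P i).indicator fun _ => (1 : ℝ))))
section Aux
open Real

lemma vol_eq_volume {S : Set ℝ} (h : S ⊆ Set.Ioo (-1:ℝ) 1) : vol S = volume S := by
  rw [vol, Measure.restrict_apply' measurableSet_Ioo, Set.inter_eq_self_of_subset_left h]

/-- indicator of `(0,s)`. -/
def chi (s : ℝ) : ℝ → ℝ := (Set.Ioo (0:ℝ) s).indicator fun _ => (1:ℝ)

lemma mem_indicator (X : BFS) {B : Set ℝ} (hB : MeasurableSet B) :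
    X.Mem (B.indicator fun _ => (1:ℝ)) := by
  have h : (B.indicator (fun _ => (1:ℝ)))
      = ⇑(MeasureTheory.SimpleFunc.piecewise B hB (MeasureTheory.SimpleFunc.const ℝ (1:ℝ))
        (MeasureTheory.SimpleFunc.const ℝ (0:ℝ))) := by
    funext x
    by_cases hx : x ∈ B <;>
      simp [MeasureTheory.SimpleFunc.coe_piecewise, Set.piecewise, Set.indicator_apply, hx]
  rw [h]; exact X.simple_mem _

lemma mem_chi (X : BFS) (s : ℝ) : X.Mem (chi s) := mem_indicator X measurableSet_Ioo

lemma distrib_indicator (E : Set ℝ) {lam : ℝ} (h0 : 0 < lam) :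
    distrib (E.indicator fun _ => (1:ℝ)) lam = if lam < 1 then vol E else 0 := by
  unfold distrib
  have hset : ∀ x, lam < |E.indicator (fun _ => (1:ℝ)) x| ↔ (lam < 1 ∧ x ∈ E) := by
    intro x
    by_cases hx : x ∈ E
    · rw [Set.indicator_of_mem hx]
      simp [hx]
    · rw [Set.indicator_of_notMem hx, abs_zero]
      simp only [hx, and_false, iff_false, not_lt]
      exact h0.le
  split_ifs with h
  · have he : {x | lam < |E.indicator (fun _ => (1:ℝ)) x|} = E := by
      ext x; rw [Set.mem_setOf_eq, hset]; simp [h]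
    rw [he]
  · have he : {x | lam < |E.indicator (fun _ => (1:ℝ)) x|} = ∅ := by
      ext x; rw [Set.mem_setOf_eq, hset]; simp only [Set.mem_empty_iff_false, iff_false]
      intro hc; exact h hc.1
    rw [he]; simp

lemma nrm_eq_chi (X : BFS) (hri : RearrInvariant X) {E : Set ℝ} (hEm : MeasurableSet E)
    (hEs : E ⊆ Set.Ioo (-1:ℝ) 1) {s : ℝ} (hs0 : 0 < s) (hs1 : s ≤ 1)
    (hvol : volume E = ENNReal.ofReal s) :
    X.Nrm (E.indicator fun _ => (1:ℝ)) = X.Nrm (chi s) := by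
  refine hri.2.2 _ _ (mem_chi X s) (mem_indicator X hEm) ?_
  intro lam hlam
  rw [distrib_indicator E hlam, chi, distrib_indicator _ hlam]
  have h1 : vol E = volume E := vol_eq_volume hEs
  have h2 : vol (Set.Ioo (0:ℝ) s) = volume (Set.Ioo (0:ℝ) s) :=
    vol_eq_volume (Set.Ioo_subset_Ioo (by norm_num) hs1)
  rw [h1, h2, hvol, Real.volume_Ioo, sub_zero]

lemma nrm_chi_mono (X : BFS) {s t : ℝ} (hst : s ≤ t) : X.Nrm (chi s) ≤ X.Nrm (chi t) := by
  refine X.nrm_mono _ _ (mem_chi X s) (mem_chi X t) (Filter.Eventually.of_forall fun x => ?_)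
  unfold chi
  by_cases hx : x ∈ Set.Ioo (0:ℝ) s
  · have hx' : x ∈ Set.Ioo (0:ℝ) t := ⟨hx.1, lt_of_lt_of_le hx.2 hst⟩
    simp [Set.indicator_apply, hx, hx']
  · rw [Set.indicator_of_notMem hx, abs_zero]
    exact abs_nonneg _

lemma nrm_chi_pos (X : BFS) {s : ℝ} (hs0 : 0 < s) : 0 < X.Nrm (chi s) := by
  rcases (X.nrm_nonneg _ (mem_chi X s)).lt_or_eq with h | h
  · exact h
  · exfalso
    have h0 : chi s =ᵐ[vol] 0 := (X.nrm_eq_zero_iff _ (mem_chi X s)).1 h.symm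
    have hsub : Set.Ioo (0:ℝ) (min s 1) ⊆ {x | chi s x ≠ 0} := by
      intro x hx
      have hx1 : x ∈ Set.Ioo (0:ℝ) s := ⟨hx.1, lt_of_lt_of_le hx.2 (min_le_left _ _)⟩
      have hv : chi s x = 1 := Set.indicator_of_mem hx1 _
      simp [hv]
    have hle : vol (Set.Ioo (0:ℝ) (min s 1)) ≤ vol {x | chi s x ≠ 0} := measure_mono hsub
    have hnull : vol {x | chi s x ≠ 0} = 0 := by
      have := h0
      rw [Filter.EventuallyEq, MeasureTheory.ae_iff] at this
      simpa using this
    have hpos : 0 < vol (Set.Ioo (0:ℝ) (min s 1)) := by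
      rw [vol_eq_volume (Set.Ioo_subset_Ioo (by norm_num) (min_le_right _ _)), Real.volume_Ioo]
      simp only [sub_zero]
      exact ENNReal.ofReal_pos.2 (lt_min hs0 one_pos)
    rw [hnull] at hle
    exact absurd hle (by simpa using hpos.ne')
end Aux
section Boyd
open Real

lemma boyd_extract (X : BFS) (hB : NontrivialBoyd X) :
    ∃ t₀ C₁ β : ℝ, 1 < t₀ ∧ 1 ≤ C₁ ∧ 0 < β ∧ β < 1 ∧ C₁ ≤ t₀ ^ β ∧
      ∀ f, X.Mem f → X.Mem (dilate (1/t₀) f) ∧ X.Nrm (dilate (1/t₀) f) ≤ C₁ * X.Nrm f := by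
  classical
  set S : Set ℝ := {r : ℝ | ∃ t ∈ Set.Ioi (1 : ℝ), r = Real.log (dilNorm X (1 / t)) / Real.log t}
    with hS
  have hSdef : upperBoyd X = sInf S := rfl
  have hne : S.Nonempty := ⟨Real.log (dilNorm X (1 / 2)) / Real.log 2, 2, by norm_num, rfl⟩
  have h0S : 0 < sInf S := by
    rw [← hSdef]; exact lt_of_lt_of_le hB.1 hB.2.1
  have hbdd : BddBelow S := by
    by_contra hb
    rw [csInf_of_not_bddBelow hb, Real.sInf_empty] at h0S
    exact lt_irrefl _ h0S
  obtain ⟨r, hrS, hr1⟩ := exists_lt_of_csInf_lt hne (show sInf S < 1 from hSdef ▸ hB.2.2)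
  obtain ⟨t₀, ht₀, hreq⟩ := hrS
  have hrS' : r ∈ S := ⟨t₀, ht₀, hreq⟩
  have ht₀1 : (1:ℝ) < t₀ := ht₀
  have hlogt₀ : 0 < Real.log t₀ := Real.log_pos ht₀1
  set SC : Set ℝ := {C : ℝ | 0 ≤ C ∧ ∀ f, X.Mem f →
      X.Mem (dilate (1/t₀) f) ∧ X.Nrm (dilate (1/t₀) f) ≤ C * X.Nrm f} with hSC
  have hdilN : dilNorm X (1/t₀) = sInf SC := rfl
  have hzero_mem : dilNorm X (1/t₀) = 0 → False := by
    intro hz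
    have hr0 : r = 0 := by rw [hreq, hz, Real.log_zero, zero_div]
    have : sInf S ≤ 0 := csInf_le hbdd (hr0 ▸ hrS')
    exact absurd h0S (not_lt.2 this)
  have hSCne : SC.Nonempty := by
    by_contra hc
    rw [Set.not_nonempty_iff_eq_empty] at hc
    exact hzero_mem (by rw [hdilN, hc, Real.sInf_empty])
  have hSCbdd : BddBelow SC := ⟨0, fun C hC => hC.1⟩
  have hdNnn : 0 ≤ dilNorm X (1/t₀) := by
    rw [hdilN]; exact le_csInf hSCne fun C hC => hC.1
  have hdNpos : 0 < dilNorm X (1/t₀) := hdNnn.lt_of_ne (fun h => hzero_mem h.symm)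
  have hdNeq : dilNorm X (1/t₀) = t₀ ^ r := by
    rw [Real.rpow_def_of_pos (lt_trans one_pos ht₀1)]
    have : Real.log t₀ * r = Real.log (dilNorm X (1/t₀)) := by
      rw [hreq]; field_simp
    rw [this, Real.exp_log hdNpos]
  set β : ℝ := (max r 0 + 1) / 2 with hβ
  have hβ0 : 0 < β := by
    have : (0:ℝ) ≤ max r 0 := le_max_right _ _
    rw [hβ]; linarith
  have hβ1 : β < 1 := by
    have : max r 0 < 1 := max_lt hr1 one_pos
    rw [hβ]; linarith
  have hmaxβ : max r 0 < β := by
    have : max r 0 < 1 := max_lt hr1 one_pos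
    rw [hβ]; linarith
  have hlt : dilNorm X (1/t₀) < t₀ ^ β := by
    rw [hdNeq]
    calc t₀ ^ r ≤ t₀ ^ (max r 0) :=
          (Real.rpow_le_rpow_left_iff ht₀1).2 (le_max_left _ _)
      _ < t₀ ^ β := (Real.rpow_lt_rpow_left_iff ht₀1).2 hmaxβ
  obtain ⟨C₀, hC₀S, hC₀lt⟩ := exists_lt_of_csInf_lt hSCne (hdilN ▸ hlt)
  have h1t₀β : (1:ℝ) < t₀ ^ β := Real.one_lt_rpow_iff_of_pos (lt_trans one_pos ht₀1) |>.2
    (Or.inl ⟨ht₀1, hβ0⟩)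
  refine ⟨t₀, max C₀ 1, β, ht₀1, le_max_right _ _, hβ0, hβ1, max_le hC₀lt.le h1t₀β.le, ?_⟩
  intro f hf
  refine ⟨(hC₀S.2 f hf).1, le_trans (hC₀S.2 f hf).2 ?_⟩
  exact mul_le_mul_of_nonneg_right (le_max_left _ _) (X.nrm_nonneg f hf)

lemma dilate_chi {t s : ℝ} (ht : 1 < t) (hs : 0 < s) (hts : t * s ≤ 1) :
    dilate (1/t) (chi s) = chi (t * s) := by
  funext x
  have ht0 : 0 < t := lt_trans one_pos ht
  have hinv : (0:ℝ) < 1/t := by positivity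
  have hst : s ≤ 1 := by nlinarith
  have hxeq : t * (1/t * x) = x := by field_simp
  have hseq : 1/t * (t * s) = s := by field_simp
  have hmem : x ∈ Set.Ioo (0:ℝ) (t*s) ↔ 1/t * x ∈ Set.Ioo (0:ℝ) s := by
    constructor
    · intro hc
      refine ⟨mul_pos hinv hc.1, ?_⟩
      have := mul_lt_mul_of_pos_left hc.2 hinv
      rwa [hseq] at this
    · intro hc
      constructor
      · have := mul_pos ht0 hc.1
        rwa [hxeq] at this
      · have := mul_lt_mul_of_pos_left hc.2 ht0
        rwa [hxeq] at this
  unfold dilate chi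
  by_cases hx : 1/t * x ∈ Set.Ioo (-1:ℝ) 1
  · rw [if_pos hx]
    by_cases hxs : 1/t * x ∈ Set.Ioo (0:ℝ) s
    · rw [Set.indicator_of_mem hxs, Set.indicator_of_mem (hmem.2 hxs)]
    · rw [Set.indicator_of_notMem hxs, Set.indicator_of_notMem (fun hc => hxs (hmem.1 hc))]
  · rw [if_neg hx, Set.indicator_of_notMem]
    intro hc
    have h2 := hmem.1 hc
    exact hx ⟨by linarith [h2.1], by linarith [h2.2, hst]⟩

lemma nrm_chi_lower (X : BFS) (hB : NontrivialBoyd X) :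
    ∃ c β : ℝ, 0 < c ∧ 0 < β ∧ β < 1 ∧ ∀ s : ℝ, 0 < s → s ≤ 1 →
      c * s ^ β ≤ X.Nrm (chi s) := by
  obtain ⟨t₀, C₁, β, ht₀, hC₁, hβ0, hβ1, hC₁le, hop⟩ := boyd_extract X hB
  have ht₀0 : (0:ℝ) < t₀ := lt_trans one_pos ht₀
  set ψ₀ := X.Nrm (chi (1/t₀)) with hψ₀
  have hψ₀pos : 0 < ψ₀ := nrm_chi_pos X (by positivity)
  have key : ∀ k : ℕ, ∀ s : ℝ, 0 < s → s ≤ 1 → ((t₀ ^ (k+1) : ℝ))⁻¹ < s →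
      ψ₀ ≤ C₁ ^ k * X.Nrm (chi s) := by
    intro k
    induction k with
    | zero =>
      intro s hs0 hs1 hlt
      rw [pow_zero, one_mul]
      refine nrm_chi_mono X ?_
      rw [pow_one] at hlt
      rw [one_div]
      exact hlt.le
    | succ k ih =>
      intro s hs0 hs1 hlt
      by_cases hcase : ((t₀ ^ (k+1) : ℝ))⁻¹ < s
      · calc ψ₀ ≤ C₁ ^ k * X.Nrm (chi s) := ih s hs0 hs1 hcase
          _ ≤ C₁ ^ (k+1) * X.Nrm (chi s) := by
            have h1 : C₁ ^ k ≤ C₁ ^ (k+1) := pow_le_pow_right₀ (by linarith) (by omega)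
            exact mul_le_mul_of_nonneg_right h1 (X.nrm_nonneg _ (mem_chi X s))
      · push_neg at hcase
        have hpk : (0:ℝ) < t₀ ^ (k+1) := by positivity
        have hpk2 : (0:ℝ) < t₀ ^ (k+2) := by positivity
        have hts1 : t₀ * s ≤ 1 := by
          have h1 : t₀ * s ≤ t₀ * (t₀ ^ (k+1))⁻¹ := by nlinarith
          have h2 : t₀ * (t₀ ^ (k+1) : ℝ)⁻¹ = (t₀ ^ k)⁻¹ := by
            field_simp
            ring
          have h3 : (1:ℝ) ≤ t₀ ^ k := one_le_pow₀ ht₀.le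
          have h4 : ((t₀:ℝ) ^ k)⁻¹ ≤ 1 := inv_le_one_of_one_le₀ h3
          rw [h2] at h1
          linarith
        have h2 : ((t₀ ^ (k+1) : ℝ))⁻¹ < t₀ * s := by
          have : t₀ * ((t₀ ^ (k+2) : ℝ))⁻¹ < t₀ * s := by
            have := hlt
            nlinarith
          have heq : t₀ * ((t₀ ^ (k+2) : ℝ))⁻¹ = ((t₀ ^ (k+1) : ℝ))⁻¹ := by
            field_simp
            ring
          rw [heq] at this
          linarith
        have hmain := ih (t₀ * s) (by positivity) hts1 h2
        have hdil : X.Nrm (chi (t₀ * s)) ≤ C₁ * X.Nrm (chi s) := by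
          have h := (hop _ (mem_chi X s)).2
          rwa [dilate_chi ht₀ hs0 hts1] at h
        calc ψ₀ ≤ C₁ ^ k * X.Nrm (chi (t₀ * s)) := hmain
          _ ≤ C₁ ^ k * (C₁ * X.Nrm (chi s)) :=
            mul_le_mul_of_nonneg_left hdil (by positivity)
          _ = C₁ ^ (k+1) * X.Nrm (chi s) := by ring
  refine ⟨ψ₀, β, hψ₀pos, hβ0, hβ1, ?_⟩
  intro s hs0 hs1
  have hex : ∃ k : ℕ, ((t₀ ^ (k+1) : ℝ))⁻¹ < s := by
    obtain ⟨n, hn⟩ := pow_unbounded_of_one_lt (s⁻¹) ht₀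
    refine ⟨n, ?_⟩
    have h1 : (s⁻¹ : ℝ) < t₀ ^ (n+1) := lt_of_lt_of_le hn (pow_le_pow_right₀ ht₀.le (by omega))
    have h2 : (0:ℝ) < t₀ ^ (n+1) := by positivity
    exact (inv_lt_comm₀ h2 hs0).2 h1
  let k := Nat.find hex
  have hk : ((t₀ ^ (k+1) : ℝ))⁻¹ < s := Nat.find_spec hex
  have hNs : 0 ≤ X.Nrm (chi s) := X.nrm_nonneg _ (mem_chi X s)
  rcases Nat.eq_zero_or_pos k with hk0 | hkpos
  · have h := key 0 s hs0 hs1 (by rw [← hk0]; exact hk)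
    rw [pow_zero, one_mul] at h
    have hsβ : s ^ β ≤ 1 := Real.rpow_le_one hs0.le hs1 hβ0.le
    nlinarith
  · have hprev : ¬ (((t₀ ^ k : ℝ))⁻¹ < s) := by
      have h := Nat.find_min hex (m := k - 1) (by omega)
      have : k - 1 + 1 = k := by omega
      rwa [this] at h
    push_neg at hprev
    have hmain := key k s hs0 hs1 hk
    have hpk : (0:ℝ) < t₀ ^ k := by positivity
    have htk : (t₀:ℝ) ^ k ≤ s⁻¹ := (le_inv_comm₀ hpk hs0).2 hprev
    have h1 : (C₁:ℝ) ^ k ≤ ((t₀:ℝ) ^ k) ^ β := by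
      have ha : (C₁:ℝ) ^ k ≤ (t₀ ^ β) ^ k := pow_le_pow_left₀ (by linarith) hC₁le k
      have hb : ((t₀:ℝ) ^ β) ^ k = ((t₀:ℝ) ^ k) ^ β := by
        rw [← Real.rpow_natCast (t₀ ^ β) k, ← Real.rpow_natCast t₀ k,
          ← Real.rpow_mul ht₀0.le, ← Real.rpow_mul ht₀0.le, mul_comm]
      rw [hb] at ha
      exact ha
    have h2 : ((t₀:ℝ) ^ k) ^ β ≤ (s⁻¹) ^ β := Real.rpow_le_rpow (by positivity) htk hβ0.le
    have h3 : ((s:ℝ)⁻¹) ^ β = (s ^ β)⁻¹ := Real.inv_rpow hs0.le β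
    have hsβpos : (0:ℝ) < s ^ β := Real.rpow_pos_of_pos hs0 β
    have h4 : ψ₀ ≤ (s ^ β)⁻¹ * X.Nrm (chi s) := by
      calc ψ₀ ≤ C₁ ^ k * X.Nrm (chi s) := hmain
        _ ≤ (s ^ β)⁻¹ * X.Nrm (chi s) := by
          refine mul_le_mul_of_nonneg_right ?_ hNs
          calc (C₁:ℝ) ^ k ≤ ((t₀:ℝ) ^ k) ^ β := h1
            _ ≤ (s⁻¹) ^ β := h2
            _ = (s ^ β)⁻¹ := h3
    calc ψ₀ * s ^ β ≤ ((s ^ β)⁻¹ * X.Nrm (chi s)) * s ^ β :=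
        mul_le_mul_of_nonneg_right h4 hsβpos.le
      _ = X.Nrm (chi s) := by field_simp
end Boyd
section FHTcalc
open Real MeasureTheory

lemma indicator_div_eq {B : Set ℝ} (x : ℝ) : ∀ y,
    (B.indicator (fun _ => (1:ℝ)) y) / (y - x) = B.indicator (fun y => (y - x)⁻¹) y := by
  intro y
  by_cases hy : y ∈ B
  · rw [Set.indicator_of_mem hy, Set.indicator_of_mem hy, one_div]
  · rw [Set.indicator_of_notMem hy, Set.indicator_of_notMem hy, zero_div]

lemma fht_indicator_eval {B : Set ℝ} (hB : MeasurableSet B) (hBsub : B ⊆ Set.Ioo (-1:ℝ) 1)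
    {v x : ℝ} (hBv : B ⊆ Set.Iio v) (hvx : v < x) :
    FHT (B.indicator fun _ => (1:ℝ)) x = (1/Real.pi) * ∫ y in B, (y - x)⁻¹ := by
  unfold FHT
  apply Filter.Tendsto.limUnder_eq
  have hev : ∀ᶠ ε in nhdsWithin (0:ℝ) (Set.Ioi 0),
      (1 / Real.pi) * ((∫ y in Set.Ioo (-1:ℝ) (x - ε), (B.indicator fun _ => (1:ℝ)) y / (y - x)) +
        ∫ y in Set.Ioo (x + ε) (1:ℝ), (B.indicator fun _ => (1:ℝ)) y / (y - x))
      = (1/Real.pi) * ∫ y in B, (y - x)⁻¹ := by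
    filter_upwards [Ioo_mem_nhdsGT_of_mem (Set.left_mem_Ico.2 (by linarith : (0:ℝ) < x - v))]
      with ε hε
    have hε0 : 0 < ε := hε.1
    have hεv : ε < x - v := hε.2
    have hsub2 : B ⊆ Set.Ioo (-1:ℝ) (x - ε) := by
      intro y hy
      have h := hBv hy
      simp only [Set.mem_Iio] at h
      exact ⟨(hBsub hy).1, by linarith⟩
    have h1 : (∫ y in Set.Ioo (-1:ℝ) (x - ε), (B.indicator fun _ => (1:ℝ)) y / (y - x))
        = ∫ y in B, (y - x)⁻¹ := by
      rw [MeasureTheory.integral_congr_ae (Filter.Eventually.of_forall fun y => indicator_div_eq x y),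
        MeasureTheory.setIntegral_indicator hB, Set.inter_eq_self_of_subset_right hsub2]
    have h2 : (∫ y in Set.Ioo (x + ε) (1:ℝ), (B.indicator fun _ => (1:ℝ)) y / (y - x)) = 0 := by
      rw [MeasureTheory.integral_congr_ae (Filter.Eventually.of_forall fun y => indicator_div_eq x y),
        MeasureTheory.setIntegral_indicator hB]
      have : Set.Ioo (x + ε) (1:ℝ) ∩ B = ∅ := by
        ext y
        simp only [Set.mem_inter_iff, Set.mem_Ioo, Set.mem_empty_iff_false, iff_false, not_and]
        intro hy1 hyB
        have h := hBv hyB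
        simp only [Set.mem_Iio] at h
        linarith [hy1.1, hy1.2]
      rw [this, MeasureTheory.setIntegral_empty]
    rw [h1, h2, add_zero]
  exact Filter.Tendsto.congr' (hev.mono fun ε h => h.symm) tendsto_const_nhds

lemma integrableOn_inv_shift {S : Set ℝ} {v x : ℝ} (hSv : S ⊆ Set.Ioo (-1:ℝ) v)
    (hvx : v < x) : MeasureTheory.IntegrableOn (fun y => (x - y)⁻¹) S := by
  have h : MeasureTheory.IntegrableOn (fun y => (x - y)⁻¹) (Set.Icc (-1:ℝ) v) := by
    apply ContinuousOn.integrableOn_Icc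
    apply ContinuousOn.inv₀
    · exact (continuous_const.sub continuous_id).continuousOn
    · intro y hy
      have : y ≤ v := hy.2
      have : 0 < x - y := by linarith
      exact this.ne'
  exact h.mono_set (subset_trans hSv Set.Ioo_subset_Icc_self)

lemma integral_inv_Ioo {u w x : ℝ} (huw : u < w) (hwx : w < x) :
    ∫ y in Set.Ioo u w, (x - y)⁻¹ = Real.log ((x - u)/(x - w)) := by
  rw [← MeasureTheory.integral_Ioc_eq_integral_Ioo, ← intervalIntegral.integral_of_le huw.le]
  have := intervalIntegral.integral_comp_sub_left (a := u) (b := w) (fun y => y⁻¹) x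
  rw [this]
  rw [integral_inv_of_pos (by linarith) (by linarith)]

lemma fht_lower {A : Set ℝ} (hA : MeasurableSet A) {u δ x : ℝ} (hδ : 0 < δ)
    (hsub : Set.Ioo u (u + 2*δ) ⊆ Set.Ioo (-1:ℝ) 1)
    (hgood : volume (Set.Ioo u (u + 2*δ) \ A) ≤ ENNReal.ofReal (δ/50))
    (hx : x ∈ Set.Ioo (u + 2*δ + δ/50) (u + 2*δ + 3*δ/100)) :
    1/Real.pi ≤ |FHT ((A ∩ Set.Ioo u (u + 2*δ)).indicator fun _ => (1:ℝ)) x| := by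
  set w := u + 2*δ with hw
  set I := Set.Ioo u w with hI
  set B := A ∩ I with hBdef
  have huw : u < w := by rw [hw]; linarith
  have hwx : w < x := by have := hx.1; linarith
  have hISub : I ⊆ Set.Ioo (-1:ℝ) w := fun y hy => ⟨(hsub hy).1, hy.2⟩
  have hBm : MeasurableSet B := hA.inter measurableSet_Ioo
  have hBsub : B ⊆ Set.Ioo (-1:ℝ) 1 := fun y hy => hsub hy.2
  have hBv : B ⊆ Set.Iio w := fun y hy => hy.2.2
  -- integrability
  have hint_I : MeasureTheory.IntegrableOn (fun y => (x - y)⁻¹) I :=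
    integrableOn_inv_shift hISub hwx
  have hint_B : MeasureTheory.IntegrableOn (fun y => (x - y)⁻¹) B :=
    hint_I.mono_set Set.inter_subset_right
  -- split
  have hsplit : (∫ y in I ∩ B, (x - y)⁻¹) + (∫ y in I \ B, (x - y)⁻¹)
      = ∫ y in I, (x - y)⁻¹ :=
    MeasureTheory.integral_inter_add_diff hBm hint_I
  have hIB : I ∩ B = B := Set.inter_eq_self_of_subset_right Set.inter_subset_right
  have hIdB : I \ B = I \ A := by rw [hBdef]; exact Set.diff_inter_self_eq_diff
  -- value of the full integral
  have hIval : (∫ y in I, (x - y)⁻¹) = Real.log ((x - u)/(x - w)) := integral_inv_Ioo huw hwx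
  -- bound from below
  have hr1 : δ/50 < x - w := by have := hx.1; rw [hw]; linarith [hx.1]
  have hr2 : x - w < 3*δ/100 := by have := hx.2; rw [hw]; linarith [hx.2]
  have hIlb : (2:ℝ) ≤ ∫ y in I, (x - y)⁻¹ := by
    rw [hIval]
    have hq : (200:ℝ)/3 ≤ (x - u)/(x - w) := by
      rw [le_div_iff₀ (by linarith : (0:ℝ) < x - w)]
      have hxu : x - u = (x - w) + 2*δ := by rw [hw]; ring
      nlinarith [hr1, hr2]
    have hexp2 : Real.exp 2 ≤ 200/3 := by
      have h1 : Real.exp 2 = Real.exp 1 * Real.exp 1 := by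
        rw [← Real.exp_add]; norm_num
      nlinarith [Real.exp_one_lt_d9, Real.exp_pos 1]
    calc (2:ℝ) = Real.log (Real.exp 2) := (Real.log_exp 2).symm
      _ ≤ Real.log (200/3) := Real.log_le_log (Real.exp_pos 2) hexp2
      _ ≤ Real.log ((x - u)/(x - w)) := Real.log_le_log (by norm_num) hq
  -- bound the removed part
  have hdub : (∫ y in I \ A, (x - y)⁻¹) ≤ 1 := by
    have hmeas : volume (I \ A) < ⊤ :=
      lt_of_le_of_lt hgood (by exact ENNReal.ofReal_lt_top)
    have hbound : ∀ y ∈ I \ A, ‖(x - y)⁻¹‖ ≤ 50/δ := by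
      intro y hy
      have hyI : y ∈ I := hy.1
      have h1 : δ/50 < x - y := by have := hyI.2; linarith
      have h2 : (0:ℝ) < x - y := by linarith [h1, hδ]
      rw [Real.norm_eq_abs, abs_of_pos (inv_pos.2 h2)]
      rw [inv_le_comm₀ h2 (by positivity)]
      calc (50/δ : ℝ)⁻¹ = δ/50 := by field_simp
        _ ≤ x - y := h1.le
    have hmeasSet : MeasurableSet (I \ A) := measurableSet_Ioo.diff hA
    have := MeasureTheory.norm_setIntegral_le_of_norm_le_const_ae' hmeas
      (Filter.Eventually.of_forall fun y hy => hbound y hy)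
    have htoReal : (volume (I \ A)).toReal ≤ δ/50 :=
      ENNReal.toReal_le_of_le_ofReal (by positivity) hgood
    calc (∫ y in I \ A, (x - y)⁻¹) ≤ ‖∫ y in I \ A, (x - y)⁻¹‖ := le_abs_self _
      _ ≤ 50/δ * (volume (I \ A)).toReal := this
      _ ≤ 50/δ * (δ/50) := by
        apply mul_le_mul_of_nonneg_left htoReal (by positivity)
      _ = 1 := by field_simp
  have hBlb : (1:ℝ) ≤ ∫ y in B, (x - y)⁻¹ := by
    have : (∫ y in B, (x - y)⁻¹) = (∫ y in I, (x - y)⁻¹) - (∫ y in I \ A, (x - y)⁻¹) := by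
      rw [← hsplit, hIB, hIdB]; ring
    rw [this]
    linarith
  -- conclude
  have heval : FHT (B.indicator fun _ => (1:ℝ)) x = (1/Real.pi) * ∫ y in B, (y - x)⁻¹ :=
    fht_indicator_eval hBm hBsub hBv hwx
  have hflip : (∫ y in B, (y - x)⁻¹) = - ∫ y in B, (x - y)⁻¹ := by
    rw [← MeasureTheory.integral_neg]
    apply MeasureTheory.integral_congr_ae
    apply Filter.Eventually.of_forall
    intro y
    show (y - x)⁻¹ = -(x - y)⁻¹
    rw [← inv_neg, neg_sub]
  rw [heval, hflip]
  have hπ : 0 < Real.pi := Real.pi_pos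
  rw [abs_mul, abs_of_pos (by positivity : (0:ℝ) < 1/Real.pi), abs_neg,
    abs_of_pos (by linarith : (0:ℝ) < ∫ y in B, (x - y)⁻¹)]
  have : 1/Real.pi * 1 ≤ 1/Real.pi * ∫ y in B, (x - y)⁻¹ :=
    mul_le_mul_of_nonneg_left hBlb (by positivity)
  linarith
end FHTcalc
section Density
open Real MeasureTheory Metric

lemma exists_density_interval {A : Set ℝ} (hA : MeasurableSet A) (hA' : A ⊆ Set.Ioo (-1:ℝ) 1)
    (h0 : 0 < vol A) :
    ∃ c Δ : ℝ, 0 < Δ ∧ Set.Ioo c (c + 2*Δ + Δ) ⊆ Set.Ioo (-1:ℝ) 1 ∧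
      volume (Set.Ioo c (c + 2*Δ) \ A) ≤ ENNReal.ofReal (Δ/100) := by
  have hvolA : 0 < volume A := by rwa [vol_eq_volume hA'] at h0
  have hae := Besicovitch.ae_tendsto_measure_inter_div volume A
  have hx₀ : ∃ x₀ ∈ A, Filter.Tendsto
      (fun r => volume (A ∩ closedBall x₀ r) / volume (closedBall x₀ r))
      (nhdsWithin 0 (Set.Ioi 0)) (nhds 1) := by
    by_contra hc
    push_neg at hc
    rw [MeasureTheory.ae_iff, Measure.restrict_apply' hA] at hae
    have hsub : A ⊆ {x | ¬ Filter.Tendsto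
        (fun r => volume (A ∩ closedBall x r) / volume (closedBall x r))
        (nhdsWithin 0 (Set.Ioi 0)) (nhds 1)} ∩ A := fun x hx => ⟨hc x hx, hx⟩
    have hle := measure_mono (μ := volume) hsub
    rw [hae] at hle
    exact absurd (lt_of_lt_of_le hvolA hle) (lt_irrefl 0)
  obtain ⟨x₀, hx₀A, htend⟩ := hx₀
  have hx₀m : x₀ ∈ Set.Ioo (-1:ℝ) 1 := hA' hx₀A
  set ρ : ℝ := min (x₀ + 1) ((1 - x₀)/2) with hρ
  have hρpos : 0 < ρ := lt_min (by linarith [hx₀m.1]) (by linarith [hx₀m.2])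
  have hev : ∀ᶠ r in nhdsWithin (0:ℝ) (Set.Ioi 0),
      ENNReal.ofReal (199/200) < volume (A ∩ closedBall x₀ r) / volume (closedBall x₀ r) :=
    htend.eventually (lt_mem_nhds (by
      rw [← ENNReal.ofReal_one]
      exact ENNReal.ofReal_lt_ofReal_iff_of_nonneg (by norm_num) |>.2 (by norm_num)))
  have hmem : Set.Ioo (0:ℝ) ρ ∈ nhdsWithin (0:ℝ) (Set.Ioi 0) :=
    Ioo_mem_nhdsGT_of_mem (Set.left_mem_Ico.2 hρpos)
  obtain ⟨Δ, hΔr, hΔρ⟩ := (hev.and (Filter.eventually_of_mem hmem fun r hr => hr)).exists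
  have hΔ0 : 0 < Δ := hΔρ.1
  have hΔρ' : Δ < ρ := hΔρ.2
  have hball : closedBall x₀ Δ = Set.Icc (x₀ - Δ) (x₀ + Δ) := Real.closedBall_eq_Icc
  have hvol_ball : volume (closedBall x₀ Δ) = ENNReal.ofReal (2*Δ) := by
    rw [hball, Real.volume_Icc]
    congr 1
    ring
  have hratio : ENNReal.ofReal (199*Δ/100) < volume (A ∩ closedBall x₀ Δ) := by
    have hne0 : volume (closedBall x₀ Δ) ≠ 0 := by
      rw [hvol_ball]
      simp only [ne_eq, ENNReal.ofReal_eq_zero, not_le]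
      linarith
    have hnetop : volume (closedBall x₀ Δ) ≠ ⊤ := by
      rw [hvol_ball]; exact ENNReal.ofReal_ne_top
    have := (ENNReal.lt_div_iff_mul_lt (Or.inl hne0) (Or.inl hnetop)).1 hΔr
    calc ENNReal.ofReal (199*Δ/100)
        = ENNReal.ofReal (199/200) * ENNReal.ofReal (2*Δ) := by
          rw [← ENNReal.ofReal_mul (by norm_num)]
          congr 1
          ring
      _ = ENNReal.ofReal (199/200) * volume (closedBall x₀ Δ) := by rw [hvol_ball]
      _ < volume (A ∩ closedBall x₀ Δ) := this
  have hdiff : volume (closedBall x₀ Δ \ A) ≤ ENNReal.ofReal (Δ/100) := by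
    by_contra hcon
    push_neg at hcon
    have hsum : volume (closedBall x₀ Δ ∩ A) + volume (closedBall x₀ Δ \ A)
        = volume (closedBall x₀ Δ) := measure_inter_add_diff _ hA
    have h1 : ENNReal.ofReal (199*Δ/100) < volume (closedBall x₀ Δ ∩ A) := by
      rwa [Set.inter_comm] at hratio
    have h2 := ENNReal.add_lt_add h1 hcon
    rw [hsum, ← ENNReal.ofReal_add (by positivity) (by positivity), hvol_ball] at h2
    have : (199*Δ/100 + Δ/100 : ℝ) = 2*Δ := by ring
    rw [this] at h2
    exact lt_irrefl _ h2
  refine ⟨x₀ - Δ, Δ, hΔ0, ?_, ?_⟩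
  · intro y hy
    have h1 : Δ ≤ x₀ + 1 := le_trans hΔρ'.le (min_le_left _ _)
    have h2 : Δ ≤ (1 - x₀)/2 := le_trans hΔρ'.le (min_le_right _ _)
    constructor
    · have := hy.1; linarith
    · have := hy.2; linarith
  · refine le_trans (measure_mono ?_) hdiff
    intro y hy
    refine ⟨?_, hy.2⟩
    rw [hball]
    have h1 := hy.1.1
    have h2 := hy.1.2
    constructor <;> [linarith; linarith]
end Density
section Key
open Real MeasureTheory

lemma key_bound (X : BFS) (hri : RearrInvariant X) (hT : THilbBounded X)
    {A : Set ℝ} (hA : MeasurableSet A)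
    {c Δ cX β : ℝ} (hcX : 0 < cX) (hβ0 : 0 < β) (hβ1 : β < 1)
    (hpsi : ∀ s : ℝ, 0 < s → s ≤ 1 → cX * s ^ β ≤ X.Nrm (chi s))
    (hΔ : 0 < Δ) (hsub3 : Set.Ioo c (c + 2*Δ + Δ) ⊆ Set.Ioo (-1:ℝ) 1)
    (hgoodtot : volume (Set.Ioo c (c + 2*Δ) \ A) ≤ ENNReal.ofReal (Δ/100))
    (n : ℕ) (hn : 1 ≤ n) :
    ENNReal.ofReal ((n:ℝ)/2 * (1/Real.pi * (cX * ((Δ/n)/100) ^ β)))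
      ≤ MXVariation X.Nrm A := by
  classical
  have hn0 : (0:ℝ) < n := by exact_mod_cast hn
  have hn1 : (1:ℝ) ≤ n := by exact_mod_cast hn
  set δ : ℝ := Δ/n with hδdef
  have hδ0 : 0 < δ := by positivity
  have hΔδ : Δ = n * δ := by rw [hδdef]; field_simp
  have hδΔ : δ ≤ Δ := by nlinarith [hδ0, hn1, hΔδ]
  have hcm : -1 ≤ c ∧ c + 2*Δ + Δ ≤ 1 := by
    rw [← Set.Ioo_subset_Ioo_iff (by linarith : c < c + 2*Δ + Δ)]
    exact hsub3
  have hδ1 : δ/100 ≤ 1 := by nlinarith [hδΔ, hcm.1, hcm.2, hΔ]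
  clear_value δ
  -- the intervals
  set u : Fin n → ℝ := fun j => c + 2*δ*(j:ℕ) with hu
  set I : Fin n → Set ℝ := fun j => Set.Ioo (u j) (u j + 2*δ) with hI
  have hjbd : ∀ j : Fin n, (0:ℝ) ≤ ((j:ℕ):ℝ) ∧ ((j:ℕ):ℝ) + 1 ≤ n := by
    intro j
    exact ⟨by positivity, by exact_mod_cast j.isLt⟩
  have hujbd : ∀ j : Fin n, c ≤ u j ∧ u j + 2*δ ≤ c + 2*Δ := by
    intro j
    obtain ⟨hj0, hj1⟩ := hjbd j
    constructor
    · show c ≤ c + 2*δ*(j:ℕ)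
      nlinarith
    · show c + 2*δ*(j:ℕ) + 2*δ ≤ c + 2*Δ
      rw [hΔδ]
      nlinarith
  have hIsub2 : ∀ j, I j ⊆ Set.Ioo c (c + 2*Δ) := by
    intro j y hy
    rw [hI, Set.mem_Ioo] at hy
    obtain ⟨h1, h2⟩ := hujbd j
    exact ⟨lt_of_le_of_lt h1 hy.1, lt_of_lt_of_le hy.2 h2⟩
  have hIsub : ∀ j, I j ⊆ Set.Ioo (-1:ℝ) 1 := by
    intro j
    refine subset_trans (hIsub2 j) (subset_trans ?_ hsub3)
    exact Set.Ioo_subset_Ioo (le_refl _) (by linarith)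
  have hImeas : ∀ j : Fin n, MeasurableSet (I j \ A) := by
    intro j
    rw [hI]
    exact measurableSet_Ioo.diff hA
  have hIdisj : ∀ i j : Fin n, i ≠ j → Disjoint (I i) (I j) := by
    have haux : ∀ i j : Fin n, i < j → Disjoint (I i) (I j) := by
      intro i j hij
      rw [hI, Set.disjoint_left]
      intro x hxi hxj
      rw [Set.mem_Ioo] at hxi hxj
      have hle : ((i:ℕ):ℝ) + 1 ≤ ((j:ℕ):ℝ) := by exact_mod_cast hij
      have h1 : u i + 2*δ ≤ u j := by
        show c + 2*δ*(i:ℕ) + 2*δ ≤ c + 2*δ*(j:ℕ)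
        nlinarith
      linarith [hxi.2, hxj.1]
    intro i j hij
    rcases lt_or_gt_of_ne hij with h | h
    · exact haux i j h
    · exact (haux j i h).symm
  clear_value u I
  -- counting bad intervals
  set bad : Finset (Fin n) :=
    Finset.univ.filter (fun j => ¬ (volume (I j \ A) ≤ ENNReal.ofReal (δ/50))) with hbad
  have hsumle : (∑ j : Fin n, volume (I j \ A)) ≤ ENNReal.ofReal (Δ/100) := by
    have hdisj' : ((Finset.univ : Finset (Fin n)) : Set (Fin n)).PairwiseDisjoint
        (fun j => I j \ A) := by
      intro i _ j _ hij
      exact Disjoint.mono Set.diff_subset Set.diff_subset (hIdisj i j hij)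
    rw [← measure_biUnion_finset hdisj' (fun j _ => hImeas j)]
    refine le_trans (measure_mono ?_) hgoodtot
    intro y hy
    simp only [Set.mem_iUnion] at hy
    obtain ⟨j, _, hyj⟩ := hy
    exact ⟨hIsub2 j hyj.1, hyj.2⟩
  have hbadcard : (bad.card : ℝ) ≤ (n:ℝ)/2 := by
    have h1 : bad.card • ENNReal.ofReal (δ/50) ≤ ∑ j ∈ bad, volume (I j \ A) := by
      refine Finset.card_nsmul_le_sum bad _ _ ?_
      intro j hj
      rw [hbad, Finset.mem_filter] at hj
      exact (not_le.1 hj.2).le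
    have h2 : (∑ j ∈ bad, volume (I j \ A)) ≤ ∑ j : Fin n, volume (I j \ A) :=
      Finset.sum_le_sum_of_subset (Finset.subset_univ bad)
    have h3 : (bad.card : ℝ≥0∞) * ENNReal.ofReal (δ/50) ≤ ENNReal.ofReal (Δ/100) := by
      rw [← nsmul_eq_mul]
      exact le_trans h1 (le_trans h2 hsumle)
    have h4 : ENNReal.ofReal (Δ/100) = ENNReal.ofReal ((n:ℝ)/2) * ENNReal.ofReal (δ/50) := by
      rw [← ENNReal.ofReal_mul (by positivity)]
      rw [hΔδ]
      congr 1
      ring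
    rw [h4] at h3
    have h5 : (bad.card : ℝ≥0∞) ≤ ENNReal.ofReal ((n:ℝ)/2) := by
      have hne : ENNReal.ofReal (δ/50) ≠ 0 := by
        simp only [ne_eq, ENNReal.ofReal_eq_zero, not_le]
        linarith
      exact (ENNReal.mul_le_mul_iff_left hne ENNReal.ofReal_ne_top).1 h3
    rw [← ENNReal.ofReal_natCast] at h5
    exact (ENNReal.ofReal_le_ofReal_iff (by positivity)).1 h5
  set good : Finset (Fin n) := Finset.univ \ bad with hgood
  have hgoodmem : ∀ j ∈ good, volume (I j \ A) ≤ ENNReal.ofReal (δ/50) := by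
    intro j hj
    rw [hgood, Finset.mem_sdiff] at hj
    have h := hj.2
    rw [hbad, Finset.mem_filter] at h
    push_neg at h
    exact h (Finset.mem_univ j)
  have hgoodcard : (n:ℝ)/2 ≤ good.card := by
    have h1 : good.card = n - bad.card := by
      rw [hgood, Finset.card_sdiff_of_subset (Finset.subset_univ bad), Finset.card_univ, Fintype.card_fin]
    have h2 : bad.card ≤ n := by
      calc bad.card ≤ (Finset.univ : Finset (Fin n)).card :=
            Finset.card_le_card (Finset.subset_univ _)
        _ = n := by rw [Finset.card_univ, Fintype.card_fin]
    have h3 : (good.card : ℝ) = (n:ℝ) - bad.card := by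
      rw [h1, Nat.cast_sub h2]
    linarith
  -- the pieces
  set P : Fin n → Set ℝ :=
    fun j => if volume (I j \ A) ≤ ENNReal.ofReal (δ/50) then A ∩ I j else ∅ with hP
  have hPgood : ∀ j : Fin n, volume (I j \ A) ≤ ENNReal.ofReal (δ/50) → P j = A ∩ I j := by
    intro j hj
    show (if volume (I j \ A) ≤ ENNReal.ofReal (δ/50) then A ∩ I j else ∅) = A ∩ I j
    rw [if_pos hj]
  have hPbad : ∀ j : Fin n, ¬ (volume (I j \ A) ≤ ENNReal.ofReal (δ/50)) → P j = ∅ := by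
    intro j hj
    show (if volume (I j \ A) ≤ ENNReal.ofReal (δ/50) then A ∩ I j else ∅) = ∅
    rw [if_neg hj]
  have hPcases : ∀ j : Fin n, P j = A ∩ I j ∨ P j = ∅ := by
    intro j
    by_cases hj : volume (I j \ A) ≤ ENNReal.ofReal (δ/50)
    · exact Or.inl (hPgood j hj)
    · exact Or.inr (hPbad j hj)
  have hPm : ∀ j, MeasurableSet (P j) := by
    intro j
    rcases hPcases j with h | h <;> rw [h]
    · rw [hI]
      exact hA.inter measurableSet_Ioo
    · exact MeasurableSet.empty
  have hPsubI : ∀ j, P j ⊆ I j := by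
    intro j
    rcases hPcases j with h | h <;> rw [h]
    · exact Set.inter_subset_right
    · exact Set.empty_subset _
  have hPd : Pairwise (Function.onFun Disjoint P) := by
    intro i j hij
    exact Disjoint.mono (hPsubI i) (hPsubI j) (hIdisj i j hij)
  have hPA : ∀ j, P j ⊆ A := by
    intro j
    rcases hPcases j with h | h <;> rw [h]
    · exact Set.inter_subset_left
    · exact Set.empty_subset _
  -- per-piece lower bound
  have hterm : ∀ j ∈ good, ENNReal.ofReal (1/Real.pi * (cX * (δ/100) ^ β))
      ≤ ENNReal.ofReal (X.Nrm (FHT ((P j).indicator fun _ => (1:ℝ)))) := by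
    intro j hj
    have hgj : volume (I j \ A) ≤ ENNReal.ofReal (δ/50) := hgoodmem j hj
    have hPj : P j = A ∩ I j := hPgood j hgj
    have hIj : I j = Set.Ioo (u j) (u j + 2*δ) := by rw [hI]
    set E : Set ℝ := Set.Ioo (u j + 2*δ + δ/50) (u j + 2*δ + 3*δ/100) with hE
    have hEsub : E ⊆ Set.Ioo (-1:ℝ) 1 := by
      refine subset_trans ?_ hsub3
      intro y hy
      rw [hE, Set.mem_Ioo] at hy
      obtain ⟨hu1, hu2⟩ := hujbd j
      constructor
      · have : c < u j + 2*δ + δ/50 := by nlinarith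
        linarith [hy.1]
      · have : u j + 2*δ + 3*δ/100 ≤ c + 2*Δ + Δ := by nlinarith
        linarith [hy.2]
    have hEvol : volume E = ENNReal.ofReal (δ/100) := by
      rw [hE, Real.volume_Ioo]
      congr 1
      ring
    have hmB : X.Mem ((A ∩ I j).indicator fun _ => (1:ℝ)) := by
      rw [hIj]
      exact mem_indicator X (hA.inter measurableSet_Ioo)
    have hmF : X.Mem (FHT ((A ∩ I j).indicator fun _ => (1:ℝ))) := hT.1 _ hmB
    have hmE : X.Mem (E.indicator fun _ => (1:ℝ)) := by
      rw [hE]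
      exact mem_indicator X measurableSet_Ioo
    have hmsE : X.Mem ((1/Real.pi) • (E.indicator fun _ => (1:ℝ))) := X.smul_mem _ _ hmE
    have hπ : (0:ℝ) < 1/Real.pi := by positivity
    have hlow' : ∀ x ∈ E, 1/Real.pi ≤ |FHT ((A ∩ I j).indicator fun _ => (1:ℝ)) x| := by
      intro x hx
      rw [hE] at hx
      rw [hIj]
      refine fht_lower hA hδ0 ?_ ?_ hx
      · rw [← hIj]; exact hIsub j
      · rw [← hIj]; exact hgj
    have hptwise : ∀ x, |((1/Real.pi) • (E.indicator fun _ => (1:ℝ))) x|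
        ≤ |FHT ((A ∩ I j).indicator fun _ => (1:ℝ)) x| := by
      intro x
      by_cases hx : x ∈ E
      · have heq : ((1/Real.pi) • (E.indicator fun _ => (1:ℝ))) x = 1/Real.pi := by
          simp [Set.indicator_of_mem hx]
        rw [heq, abs_of_pos hπ]
        exact hlow' x hx
      · have heq : ((1/Real.pi) • (E.indicator fun _ => (1:ℝ))) x = 0 := by
          simp [Set.indicator_of_notMem hx]
        rw [heq, abs_zero]
        exact abs_nonneg _
    have h1 : X.Nrm ((1/Real.pi) • (E.indicator fun _ => (1:ℝ)))
        ≤ X.Nrm (FHT ((A ∩ I j).indicator fun _ => (1:ℝ))) :=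
      X.nrm_mono _ _ hmsE hmF (Filter.Eventually.of_forall hptwise)
    have h2 : X.Nrm ((1/Real.pi) • (E.indicator fun _ => (1:ℝ)))
        = 1/Real.pi * X.Nrm (E.indicator fun _ => (1:ℝ)) := by
      rw [X.nrm_smul _ _ hmE, abs_of_pos hπ]
    have h3 : X.Nrm (E.indicator fun _ => (1:ℝ)) = X.Nrm (chi (δ/100)) := by
      refine nrm_eq_chi X hri ?_ hEsub (by positivity) hδ1 hEvol
      rw [hE]
      exact measurableSet_Ioo
    have h4 : cX * (δ/100) ^ β ≤ X.Nrm (chi (δ/100)) := hpsi _ (by positivity) hδ1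
    apply ENNReal.ofReal_le_ofReal
    rw [hPj]
    calc 1/Real.pi * (cX * (δ/100) ^ β) ≤ 1/Real.pi * X.Nrm (chi (δ/100)) :=
        mul_le_mul_of_nonneg_left h4 hπ.le
      _ = X.Nrm ((1/Real.pi) • (E.indicator fun _ => (1:ℝ))) := by rw [h2, h3]
      _ ≤ X.Nrm (FHT ((A ∩ I j).indicator fun _ => (1:ℝ))) := h1
  -- sum lower bound
  have hsum : ENNReal.ofReal ((n:ℝ)/2 * (1/Real.pi * (cX * (δ/100) ^ β)))
      ≤ ∑ j : Fin n, ENNReal.ofReal (X.Nrm (FHT ((P j).indicator fun _ => (1:ℝ)))) := by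
    have h1 : (good.card : ℝ≥0∞) * ENNReal.ofReal (1/Real.pi * (cX * (δ/100) ^ β))
        ≤ ∑ j ∈ good, ENNReal.ofReal (X.Nrm (FHT ((P j).indicator fun _ => (1:ℝ)))) := by
      rw [← nsmul_eq_mul]
      exact Finset.card_nsmul_le_sum good _ _ hterm
    have h2 : (∑ j ∈ good, ENNReal.ofReal (X.Nrm (FHT ((P j).indicator fun _ => (1:ℝ)))))
        ≤ ∑ j : Fin n, ENNReal.ofReal (X.Nrm (FHT ((P j).indicator fun _ => (1:ℝ)))) :=
      Finset.sum_le_sum_of_subset (Finset.subset_univ good)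
    refine le_trans ?_ (le_trans h1 h2)
    rw [ENNReal.ofReal_mul (by positivity)]
    refine mul_le_mul_of_nonneg_right ?_ zero_le
    rw [← ENNReal.ofReal_natCast good.card]
    exact ENNReal.ofReal_le_ofReal hgoodcard
  refine le_trans (le_trans (le_of_eq ?_) hsum) ?_
  · rw [hδdef]
  · rw [MXVariation]
    refine le_iSup_of_le n ?_
    refine le_iSup_of_le P ?_
    refine le_iSup_of_le hPm ?_
    refine le_iSup_of_le hPd ?_
    exact le_iSup_of_le hPA le_rfl
end Key

/-- The vector measure `m_X` has totally infinite variation: `|m_X|(A) = ∞` for every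
Borel `A ⊆ (-1,1)` of positive Lebesgue measure. -/
theorem mX_variation_infinite (X : BFS) (hri : RearrInvariant X)
    (hB : NontrivialBoyd X) (hT : THilbBounded X)
    (A : Set ℝ) (hA : MeasurableSet A) (hA' : A ⊆ Set.Ioo (-1 : ℝ) 1)
    (h0 : 0 < vol A) : MXVariation X.Nrm A = ⊤ := by
  obtain ⟨cX, β, hcX, hβ0, hβ1, hpsi⟩ := nrm_chi_lower X hB
  obtain ⟨c, Δ, hΔ, hsub3, hgoodtot⟩ := exists_density_interval hA hA' h0
  by_contra hfin
  set M : ℝ := (MXVariation X.Nrm A).toReal with hM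
  have hπ := Real.pi_pos
  set K : ℝ := cX * (Δ/100) ^ β / (2 * Real.pi) with hK
  have hKpos : 0 < K := by
    rw [hK]
    have : (0:ℝ) < (Δ/100) ^ β := Real.rpow_pos_of_pos (by linarith) β
    positivity
  have htends : Filter.Tendsto (fun x : ℝ => K * x ^ (1 - β)) Filter.atTop Filter.atTop :=
    (_root_.tendsto_rpow_atTop (by linarith)).const_mul_atTop hKpos
  have htendn : Filter.Tendsto (fun m : ℕ => K * (m:ℝ) ^ (1 - β)) Filter.atTop Filter.atTop :=
    htends.comp tendsto_natCast_atTop_atTop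
  have hev : ∀ᶠ m : ℕ in Filter.atTop, M < K * (m:ℝ) ^ (1-β) := htendn.eventually_gt_atTop M
  obtain ⟨m, hmM, hm1⟩ := (hev.and (Filter.eventually_ge_atTop 1)).exists
  have hkey := key_bound X hri hT hA hcX hβ0 hβ1 hpsi hΔ hsub3 hgoodtot m hm1
  have hm0 : (0:ℝ) < m := by exact_mod_cast hm1
  have hβm : (0:ℝ) < (m:ℝ) ^ β := Real.rpow_pos_of_pos hm0 β
  have hCeq : (m:ℝ)/2 * (1/Real.pi * (cX * ((Δ/m)/100) ^ β)) = K * (m:ℝ) ^ (1-β) := by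
    have h1 : ((Δ/m)/100 : ℝ) = (Δ/100) * ((m:ℝ))⁻¹ := by
      field_simp
    rw [h1, Real.mul_rpow (by positivity) (by positivity), Real.inv_rpow hm0.le,
      hK, Real.rpow_sub hm0, Real.rpow_one]
    field_simp
  rw [hCeq] at hkey
  have hlt : MXVariation X.Nrm A < ENNReal.ofReal (K * (m:ℝ)^(1-β)) := by
    have h2 : MXVariation X.Nrm A = ENNReal.ofReal M := by
      rw [hM, ENNReal.ofReal_toReal hfin]
    rw [h2]
    have hpos : (0:ℝ) < K * (m:ℝ)^(1-β) := by
      have : (0:ℝ) < (m:ℝ) ^ (1-β) := Real.rpow_pos_of_pos hm0 _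
      positivity
    exact (ENNReal.ofReal_lt_ofReal_iff hpos).2 hmM
  exact absurd hkey (not_le.2 hlt)
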